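/- arXiv:1908.06222 — 4 statements merged into one kernel-verified Lean document; each statement's English description precedes it below -/
import Mathlib

section
/- Let F be a real inner product space, D_F a linear subspace of F, and q_F : D_F → ℝ a function with q_F ≥ 0 on D_F. Let E be a real inner product space, W an n-dimensional subspace of E (n ≥ 1), q_E : E → ℝ with q_E ≥ 0 on W, and λ ≥ 0 with q_E(u) ≤ λ‖u‖² for all u ∈ W. Let δ ≥ 0, δ' ≥ 0 with δ(1 + λ) < 1, and let J : E → F be a linear map with J(W) ⊆ D_F such that for all u ∈ W: |‖u‖² − ‖J u‖²| ≤ δ(‖u‖² + q_E(u)) and q_F(J u) − q_E(u) ≤ δ' · q_E(u). Then μ_n(q_F) ≤ ((1 + δ')/(1 − δ(1+λ))) · λ. -/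
/-- The `n`-th min-max value of a function `q` (an abstract energy form) on a linear
subspace `D` of a real inner product space `H`: the infimum, over all `n`-dimensional
linear subspaces `W` of `D`, of the supremum over nonzero `x ∈ W` of the Rayleigh
quotient `q x / ‖x‖²`, computed in the extended reals (so it is `+∞` when `D` contains
no `n`-dimensional subspace). -/
noncomputable def minmaxVal {H : Type*} [NormedAddCommGroup H] [InnerProductSpace ℝ H]
    (D : Submodule ℝ H) (q : H → ℝ) (n : ℕ) : EReal :=
  ⨅ W : {W : Submodule ℝ H // W ≤ D ∧ FiniteDimensional ℝ W ∧ Module.finrank ℝ W = n},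
    ⨆ x : {x : H // x ∈ W.1 ∧ x ≠ 0}, ((q x.1 / ‖x.1‖ ^ 2 : ℝ) : EReal)

/-- If `W` is an `n`-dimensional subspace (`n ≥ 1`) of `E` on which the
nonnegative energy `qE` satisfies `qE u ≤ λ‖u‖²`, and `J : E → F` is a linear map into
`D_F` that is a near isometry with `H¹`-type error `δ` (with `δ(1+λ) < 1`) and increases
energy by a relative error at most `δ'` on `W`, then the `n`-th min-max value of `qF` on
`D_F` is at most `((1 + δ')/(1 - δ(1+λ))) · λ`. -/
theorem minmax_le_of_transfer
    {E F : Type*} [NormedAddCommGroup E] [InnerProductSpace ℝ E]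
    [NormedAddCommGroup F] [InnerProductSpace ℝ F]
    (DF : Submodule ℝ F) (qF : F → ℝ) (hqF : ∀ v ∈ DF, 0 ≤ qF v)
    (W : Submodule ℝ E) [FiniteDimensional ℝ W] (n : ℕ) (hn : 1 ≤ n)
    (hdim : Module.finrank ℝ W = n)
    (qE : E → ℝ) (hqE : ∀ u ∈ W, 0 ≤ qE u)
    (lam : ℝ) (hlam : 0 ≤ lam) (hbound : ∀ u ∈ W, qE u ≤ lam * ‖u‖ ^ 2)
    (δ δ' : ℝ) (hδ0 : 0 ≤ δ) (hδ'0 : 0 ≤ δ') (hδΛ : δ * (1 + lam) < 1)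
    (J : E →ₗ[ℝ] F) (hJW : W.map J ≤ DF)
    (hiso : ∀ u ∈ W, |‖u‖ ^ 2 - ‖J u‖ ^ 2| ≤ δ * (‖u‖ ^ 2 + qE u))
    (henergy : ∀ u ∈ W, qF (J u) - qE u ≤ δ' * qE u) :
    minmaxVal DF qF n ≤ (((1 + δ') / (1 - δ * (1 + lam)) * lam : ℝ) : EReal) := by
  set c := 1 - δ * (1 + lam) with hc
  have hc0 : 0 < c := by simp only [hc]; linarith
  have hJlow : ∀ u ∈ W, c * ‖u‖ ^ 2 ≤ ‖J u‖ ^ 2 := by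
    intro u hu
    have h1 := abs_le.mp (hiso u hu)
    have h2 : qE u ≤ lam * ‖u‖ ^ 2 := hbound u hu
    have h3 : 0 ≤ qE u := hqE u hu
    simp only [hc]; nlinarith [sq_nonneg ‖u‖]
  have hinj : Function.Injective (J.comp W.subtype) := by
    rw [← LinearMap.ker_eq_bot, Submodule.eq_bot_iff]
    intro x hx
    have hx' : J x.1 = 0 := hx
    have h := hJlow x.1 x.2
    rw [hx'] at h
    simp only [norm_zero] at h
    have hsq : ‖(x : E)‖ ^ 2 = 0 := by nlinarith [sq_nonneg ‖(x : E)‖]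
    have hnx : ‖(x : E)‖ = 0 := pow_eq_zero_iff two_ne_zero |>.mp hsq
    exact Subtype.ext (norm_eq_zero.mp hnx)
  have hrange : LinearMap.range (J.comp W.subtype) = W.map J := by
    rw [LinearMap.range_comp, Submodule.range_subtype]
  have e : W ≃ₗ[ℝ] (W.map J) :=
    (LinearEquiv.ofInjective _ hinj).trans (LinearEquiv.ofEq _ _ hrange)
  have hfin : FiniteDimensional ℝ (W.map J) := Module.Finite.equiv e
  have hrank : Module.finrank ℝ (W.map J) = n := by
    rw [← e.finrank_eq]; exact hdim
  refine iInf_le_of_le ⟨W.map J, hJW, hfin, hrank⟩ (iSup_le ?_)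
  rintro ⟨x, hxW', hx0⟩
  rcases Submodule.mem_map.mp hxW' with ⟨u, hu, rfl⟩
  have hu0 : u ≠ 0 := by rintro rfl; simp at hx0
  have hnu : 0 < ‖u‖ ^ 2 := pow_pos (norm_pos_iff.mpr hu0) 2
  have hJu : 0 < ‖J u‖ ^ 2 := lt_of_lt_of_le (by positivity) (hJlow u hu)
  have hq : qF (J u) ≤ (1 + δ') * qE u := by
    have := henergy u hu; linarith
  have hq2 : qF (J u) ≤ ((1 + δ') / c * lam) * ‖J u‖ ^ 2 := by
    have h3 : qE u ≤ lam * ‖u‖ ^ 2 := hbound u hu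
    have h4 := hJlow u hu
    have h5 : 0 ≤ qE u := hqE u hu
    calc qF (J u) ≤ (1 + δ') * qE u := hq
      _ ≤ (1 + δ') * (lam * ‖u‖ ^ 2) := by nlinarith
      _ = ((1 + δ') / c * lam) * (c * ‖u‖ ^ 2) := by field_simp
      _ ≤ ((1 + δ') / c * lam) * ‖J u‖ ^ 2 :=
          mul_le_mul_of_nonneg_left h4
            (mul_nonneg (div_nonneg (by linarith) hc0.le) hlam)
  have hfinal : qF (J u) / ‖J u‖ ^ 2 ≤ (1 + δ') / c * lam := by
    rw [div_le_iff₀ hJu]; exact hq2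
  exact_mod_cast EReal.coe_le_coe_iff.mpr hfinal
end

section
/- Let H₁ and H₂ be real inner product spaces with linear subspaces D₁ ⊆ H₁ and D₂ ⊆ H₂, and let q₁ : D₁ → ℝ and q₂ : D₂ → ℝ be functions that are nonnegative on D₁ and D₂ respectively. Let n ≥ 1, and let δ ≥ 0, δ' ≥ 0 and Λ > 0 satisfy δ(1 + Λ) < 1 and μ_n(q₂) < Λ. Let J : D₂ → D₁ be a linear map such that every u ∈ D₂ with q₂(u) ≤ Λ‖u‖² satisfies |‖u‖² − ‖J u‖²| ≤ δ(‖u‖² + q₂(u)) and q₁(J u) − q₂(u) ≤ δ' · q₂(u). Then μ_n(q₁) ≤ ((1 + δ')/(1 − δ(1+Λ))) · μ_n(q₂). -/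
/-!
Pick `c` strictly between `μ_n(q₂)` and `Λ`, and an `n`-dimensional `W ⊆ D₂` on which
`q₂ ≤ c ‖·‖²`. Since `c < Λ`, both estimates on `J` apply on `W`: they give
`‖J u‖² ≥ (1 - δ(1+Λ)) ‖u‖²`, so `J` is injective on `W` and `J W` is `n`-dimensional, and
`q₁ (J u) ≤ (1 + δ') c ‖u‖²`. Hence the Rayleigh quotient of `q₁` on `J W` is at most
`(1 + δ') c / (1 - δ(1+Λ))`; letting `c ↓ μ_n(q₂)` gives the claim.
-/

open Module Filter Topology

section MinmaxVal

variable {H : Type*} [NormedAddCommGroup H] [InnerProductSpace ℝ H]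
  {D : Submodule ℝ H} {q : H → ℝ} {n : ℕ}

theorem minmaxVal_le_of_forall_le {V : Submodule ℝ H} [FiniteDimensional ℝ V]
    (hVD : V ≤ D) (hV : finrank ℝ V = n) {b : ℝ}
    (hb : ∀ x ∈ V, x ≠ 0 → q x ≤ b * ‖x‖ ^ 2) :
    minmaxVal D q n ≤ b := by
  refine iInf_le_of_le ⟨V, hVD, inferInstance, hV⟩ (iSup_le fun x => ?_)
  have hx : 0 < ‖x.1‖ ^ 2 := by have := norm_pos_iff.mpr x.2.2; positivity
  exact EReal.coe_le_coe_iff.mpr ((div_le_iff₀ hx).mpr (hb x.1 x.2.1 x.2.2))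

theorem exists_forall_le_of_minmaxVal_lt {c : ℝ} (h : minmaxVal D q n < c) :
    ∃ W : Submodule ℝ H, W ≤ D ∧ FiniteDimensional ℝ W ∧ finrank ℝ W = n ∧
      ∀ x ∈ W, x ≠ 0 → q x ≤ c * ‖x‖ ^ 2 := by
  obtain ⟨⟨W, hWD, hWfin, hWn⟩, hW⟩ := iInf_lt_iff.mp h
  refine ⟨W, hWD, hWfin, hWn, fun x hxW hx => ?_⟩
  have hlt : q x / ‖x‖ ^ 2 < c :=
    EReal.coe_lt_coe_iff.mp ((le_iSup_of_le ⟨x, hxW, hx⟩ le_rfl).trans_lt hW)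
  have hx2 : 0 < ‖x‖ ^ 2 := by have := norm_pos_iff.mpr hx; positivity
  exact ((div_lt_iff₀ hx2).mp hlt).le

theorem minmaxVal_nonneg (hn : 0 < n) (hq : ∀ x ∈ D, 0 ≤ q x) : 0 ≤ minmaxVal D q n := by
  refine le_iInf fun ⟨W, hWD, hWfin, hWn⟩ => ?_
  have : Nontrivial W := finrank_pos_iff.mp (hWn ▸ hn)
  obtain ⟨x, hx⟩ := exists_ne (0 : W)
  refine le_iSup_of_le ⟨x, x.2, by simpa using hx⟩ (EReal.coe_nonneg.mpr ?_)
  exact div_nonneg (hq x (hWD x.2)) (sq_nonneg _)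

theorem minmaxVal_le_div_of_linearMap {E : Type*} [NormedAddCommGroup E] [NormedSpace ℝ E]
    [FiniteDimensional ℝ E] (hE : finrank ℝ E = n) (L : E →ₗ[ℝ] H)
    (hLD : LinearMap.range L ≤ D) {a b : ℝ} (ha : 0 < a) (hb : 0 ≤ b)
    (hlow : ∀ w, w ≠ 0 → a * ‖w‖ ^ 2 ≤ ‖L w‖ ^ 2)
    (hup : ∀ w, w ≠ 0 → q (L w) ≤ b * ‖w‖ ^ 2) :
    minmaxVal D q n ≤ (b / a : ℝ) := by
  have hinj : Function.Injective L := by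
    refine (injective_iff_map_eq_zero L).mpr fun w hw => ?_
    by_contra hw0
    have h := hlow w hw0
    rw [hw, norm_zero] at h
    have : 0 < ‖w‖ ^ 2 := by have := norm_pos_iff.mpr hw0; positivity
    nlinarith
  refine minmaxVal_le_of_forall_le hLD (by rw [LinearMap.finrank_range_of_inj hinj, hE]) ?_
  rintro _ ⟨w, rfl⟩ hLw
  have hw : w ≠ 0 := by rintro rfl; exact hLw (map_zero L)
  calc q (L w) ≤ b * ‖w‖ ^ 2 := hup w hw
    _ = b / a * (a * ‖w‖ ^ 2) := by field_simp
    _ ≤ b / a * ‖L w‖ ^ 2 := by gcongr; exact hlow w hw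

end MinmaxVal

theorem minmaxVal_le_of_transfer
    {H₁ H₂ : Type*} [NormedAddCommGroup H₁] [InnerProductSpace ℝ H₁]
    [NormedAddCommGroup H₂] [InnerProductSpace ℝ H₂]
    {D₁ : Submodule ℝ H₁} {D₂ : Submodule ℝ H₂} {q₁ : H₁ → ℝ} {q₂ : H₂ → ℝ} {n : ℕ}
    {δ δ' Λ : ℝ} (hδ0 : 0 ≤ δ) (hδ'0 : 0 ≤ δ') (hδΛ : δ * (1 + Λ) < 1)
    (J : D₂ →ₗ[ℝ] D₁)
    (hiso : ∀ u : D₂, q₂ u ≤ Λ * ‖u‖ ^ 2 → |‖u‖ ^ 2 - ‖J u‖ ^ 2| ≤ δ * (‖u‖ ^ 2 + q₂ u))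
    (henergy : ∀ u : D₂, q₂ u ≤ Λ * ‖u‖ ^ 2 → q₁ (J u) - q₂ u ≤ δ' * q₂ u)
    {c : ℝ} (hc : 0 ≤ c) (hcΛ : c ≤ Λ) (hμc : minmaxVal D₂ q₂ n < c) :
    minmaxVal D₁ q₁ n ≤ ((1 + δ') * c / (1 - δ * (1 + Λ)) : ℝ) := by
  have hlow : ∀ u : D₂, q₂ u ≤ c * ‖u‖ ^ 2 → (1 - δ * (1 + Λ)) * ‖u‖ ^ 2 ≤ ‖J u‖ ^ 2 := by
    intro u hu
    have hqΛ : q₂ u ≤ Λ * ‖u‖ ^ 2 := hu.trans (by gcongr)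
    have := mul_le_mul_of_nonneg_left hqΛ hδ0
    linarith [le_abs_self (‖u‖ ^ 2 - ‖J u‖ ^ 2), hiso u hqΛ]
  have hup : ∀ u : D₂, q₂ u ≤ c * ‖u‖ ^ 2 → q₁ (J u) ≤ (1 + δ') * c * ‖u‖ ^ 2 := by
    intro u hu
    have := mul_le_mul_of_nonneg_left hu hδ'0
    linarith [henergy u (hu.trans (by gcongr))]
  obtain ⟨W, hWD, _, hWn, hW⟩ := exists_forall_le_of_minmaxVal_lt hμc
  have hqc : ∀ w : W, w ≠ 0 → q₂ w ≤ c * ‖w‖ ^ 2 :=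
    fun w hw => hW w w.2 (by simpa using hw)
  refine minmaxVal_le_div_of_linearMap hWn (D₁.subtype ∘ₗ J ∘ₗ Submodule.inclusion hWD)
    ?_ (by linarith) (by positivity) (fun w hw => hlow (Submodule.inclusion hWD w) (hqc w hw))
    (fun w hw => hup (Submodule.inclusion hWD w) (hqc w hw))
  rintro _ ⟨w, rfl⟩
  exact (J _).2

theorem minmax_le_minmax_of_transfer_general
    {H₁ H₂ : Type*} [NormedAddCommGroup H₁] [InnerProductSpace ℝ H₁]
    [NormedAddCommGroup H₂] [InnerProductSpace ℝ H₂]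
    (D₁ : Submodule ℝ H₁) (D₂ : Submodule ℝ H₂)
    (q₁ : H₁ → ℝ) (q₂ : H₂ → ℝ)
    (hq₂ : ∀ u ∈ D₂, 0 ≤ q₂ u)
    (n : ℕ) (hn : 1 ≤ n)
    (δ δ' Λ : ℝ) (hδ0 : 0 ≤ δ) (hδ'0 : 0 ≤ δ')
    (hδΛ : δ * (1 + Λ) < 1)
    (hμΛ : minmaxVal D₂ q₂ n < (Λ : EReal))
    (J : D₂ →ₗ[ℝ] D₁)
    (hiso : ∀ u : D₂, q₂ u ≤ Λ * ‖u‖ ^ 2 →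
      |‖u‖ ^ 2 - ‖J u‖ ^ 2| ≤ δ * (‖u‖ ^ 2 + q₂ u))
    (henergy : ∀ u : D₂, q₂ u ≤ Λ * ‖u‖ ^ 2 →
      q₁ (J u) - q₂ u ≤ δ' * q₂ u) :
    minmaxVal D₁ q₁ n ≤
      (((1 + δ') / (1 - δ * (1 + Λ)) : ℝ) : EReal) * minmaxVal D₂ q₂ n := by
  have hμ0 := minmaxVal_nonneg hn hq₂
  set r := (minmaxVal D₂ q₂ n).toReal
  have hr : minmaxVal D₂ q₂ n = r :=
    (EReal.coe_toReal (hμΛ.trans (EReal.coe_lt_top Λ)).ne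
      (EReal.bot_lt_zero.trans_le hμ0).ne').symm
  rw [hr, EReal.coe_nonneg] at hμ0
  rw [hr, EReal.coe_lt_coe_iff] at hμΛ
  rw [hr, ← EReal.coe_mul]
  have hcont : Tendsto (fun c : ℝ => ((((1 + δ') / (1 - δ * (1 + Λ))) * c : ℝ) : EReal))
      (𝓝[>] r) (𝓝 _) :=
    ((continuous_coe_real_ereal.comp (continuous_const_mul _)).tendsto r).mono_left
      nhdsWithin_le_nhds
  refine ge_of_tendsto hcont ?_
  filter_upwards [Ioo_mem_nhdsGT hμΛ] with c ⟨hrc, hcΛ⟩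
  rw [div_mul_eq_mul_div]
  exact minmaxVal_le_of_transfer hδ0 hδ'0 hδΛ J hiso henergy (hμ0.trans hrc.le)
    hcΛ.le (hr ▸ EReal.coe_lt_coe_iff.mpr hrc)

/-- Transfer of min-max values: if `μ_n(q₂) < Λ`, `δ(1+Λ) < 1`, and the
linear map `J : D₂ → D₁` is a near isometry with `H¹`-type error `δ` and increases
energy by relative error at most `δ'` on every `u ∈ D₂` with Rayleigh quotient at most
`Λ`, then `μ_n(q₁) ≤ ((1 + δ')/(1 - δ(1+Λ))) · μ_n(q₂)`. -/
theorem minmax_le_minmax_of_transfer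
    {H₁ H₂ : Type*} [NormedAddCommGroup H₁] [InnerProductSpace ℝ H₁]
    [NormedAddCommGroup H₂] [InnerProductSpace ℝ H₂]
    (D₁ : Submodule ℝ H₁) (D₂ : Submodule ℝ H₂)
    (q₁ : H₁ → ℝ) (q₂ : H₂ → ℝ)
    (hq₁ : ∀ v ∈ D₁, 0 ≤ q₁ v) (hq₂ : ∀ u ∈ D₂, 0 ≤ q₂ u)
    (n : ℕ) (hn : 1 ≤ n)
    (δ δ' Λ : ℝ) (hδ0 : 0 ≤ δ) (hδ'0 : 0 ≤ δ') (hΛ0 : 0 < Λ)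
    (hδΛ : δ * (1 + Λ) < 1)
    (hμΛ : minmaxVal D₂ q₂ n < (Λ : EReal))
    (J : D₂ →ₗ[ℝ] D₁)
    (hiso : ∀ u : D₂, q₂ u ≤ Λ * ‖u‖ ^ 2 →
      |‖u‖ ^ 2 - ‖J u‖ ^ 2| ≤ δ * (‖u‖ ^ 2 + q₂ u))
    (henergy : ∀ u : D₂, q₂ u ≤ Λ * ‖u‖ ^ 2 →
      q₁ (J u) - q₂ u ≤ δ' * q₂ u) :
    minmaxVal D₁ q₁ n ≤
      (((1 + δ') / (1 - δ * (1 + Λ)) : ℝ) : EReal) * minmaxVal D₂ q₂ n :=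
  minmax_le_minmax_of_transfer_general D₁ D₂ q₁ q₂ hq₂ n hn δ δ' Λ hδ0 hδ'0 hδΛ hμΛ J hiso henergy
end

section
/- Let (H_k)_{k∈ℕ} be a sequence of real inner product spaces with linear subspaces D_k ⊆ H_k and functions q_k : D_k → ℝ nonnegative on D_k, and let H be a real inner product space with a linear subspace D ⊆ H and a function q : D → ℝ nonnegative on D. Let n ≥ 1 and Λ > 0 be such that μ_n(q_k) < Λ for all k. Suppose there are real numbers δ_k ≥ 0 with δ_k → 0 and linear maps J_k : D_k → D such that for every k and every u ∈ D_k with q_k(u) ≤ Λ‖u‖² one has |‖u‖² − ‖J_k u‖²| ≤ δ_k(‖u‖² + q_k(u)) and q(J_k u) − q_k(u) ≤ δ_k · q_k(u). Then μ_n(q) ≤ liminf_{k→∞} μ_n(q_k). -/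
lemma minmaxVal_le_of_subspace {H : Type*} [NormedAddCommGroup H] [InnerProductSpace ℝ H]
    (D : Submodule ℝ H) (q : H → ℝ) (n : ℕ)
    (W : Submodule ℝ H) (hWD : W ≤ D) (hfin : FiniteDimensional ℝ W)
    (hrank : Module.finrank ℝ W = n) (C : ℝ)
    (hC : ∀ x ∈ W, x ≠ 0 → q x / ‖x‖ ^ 2 ≤ C) :
    minmaxVal D q n ≤ (C : EReal) := by
  refine iInf_le_of_le ⟨W, hWD, hfin, hrank⟩ ?_
  exact iSup_le fun x => EReal.coe_le_coe_iff.mpr (hC x.1 x.2.1 x.2.2)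

lemma minmaxVal_nonneg_s6 {H : Type*} [NormedAddCommGroup H] [InnerProductSpace ℝ H]
    (D : Submodule ℝ H) (q : H → ℝ) (hq : ∀ u ∈ D, 0 ≤ q u) (n : ℕ) (hn : 1 ≤ n) :
    (0 : EReal) ≤ minmaxVal D q n := by
  refine le_iInf fun W => ?_
  obtain ⟨W, hWD, hfin, hrank⟩ := W
  have hnt : Nontrivial W := by
    rw [← Module.finrank_pos_iff (R := ℝ)]
    omega
  obtain ⟨x, hx⟩ := exists_ne (0 : W)
  have hx0 : (x : H) ≠ 0 := by simpa using hx
  refine le_trans ?_ (le_iSup _ (⟨(x : H), x.2, hx0⟩ : {y : H // y ∈ W ∧ y ≠ 0}))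
  have h0 : (0:ℝ) ≤ q x / ‖(x:H)‖^2 := div_nonneg (hq _ (hWD x.2)) (by positivity)
  exact_mod_cast h0

set_option maxHeartbeats 4000000 in
/-- ("averaging operators" half of spectral convergence.) If
`μ_n(q_k) < Λ` for all `k` and there are linear maps `J_k : D_k → D` that are near
isometries with `H¹`-type error `δ_k → 0` and increase energy by a relative error at
most `δ_k`, on every `u ∈ D_k` with Rayleigh quotient at most `Λ`, then
`μ_n(q) ≤ liminf_k μ_n(q_k)`. -/
theorem minmax_le_liminf_of_averaging
    {H : Type*} [NormedAddCommGroup H] [InnerProductSpace ℝ H]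
    (Hk : ℕ → Type*) [∀ k, NormedAddCommGroup (Hk k)] [∀ k, InnerProductSpace ℝ (Hk k)]
    (D : Submodule ℝ H) (Dk : ∀ k, Submodule ℝ (Hk k))
    (q : H → ℝ) (qk : ∀ k, Hk k → ℝ)
    (hq : ∀ u ∈ D, 0 ≤ q u) (hqk : ∀ k, ∀ u ∈ Dk k, 0 ≤ qk k u)
    (n : ℕ) (hn : 1 ≤ n) (Λ : ℝ) (hΛ : 0 < Λ)
    (hμΛ : ∀ k, minmaxVal (Dk k) (qk k) n < (Λ : EReal))
    (δ : ℕ → ℝ) (hδ0 : ∀ k, 0 ≤ δ k)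
    (hδlim : Filter.Tendsto δ Filter.atTop (nhds 0))
    (J : ∀ k, Dk k →ₗ[ℝ] D)
    (hiso : ∀ k, ∀ u : Dk k, qk k u ≤ Λ * ‖u‖ ^ 2 →
      |‖u‖ ^ 2 - ‖J k u‖ ^ 2| ≤ δ k * (‖u‖ ^ 2 + qk k u))
    (henergy : ∀ k, ∀ u : Dk k, qk k u ≤ Λ * ‖u‖ ^ 2 →
      q (J k u) - qk k u ≤ δ k * qk k u) :
    minmaxVal D q n ≤
      Filter.liminf (fun k => minmaxVal (Dk k) (qk k) n) Filter.atTop := by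
  set L := Filter.liminf (fun k => minmaxVal (Dk k) (qk k) n) Filter.atTop with hLdef
  have hnonneg : ∀ k, (0:EReal) ≤ minmaxVal (Dk k) (qk k) n :=
    fun k => minmaxVal_nonneg_s6 _ _ (hqk k) n hn
  have hL0 : (0:EReal) ≤ L :=
    Filter.le_liminf_of_le (by isBoundedDefault) (Filter.Eventually.of_forall hnonneg)
  have hLΛ : L ≤ (Λ : EReal) :=
    Filter.liminf_le_of_frequently_le
      (Filter.Frequently.of_forall fun k => (hμΛ k).le) (by isBoundedDefault)
  have hne_bot : L ≠ ⊥ := fun h => by simp [h] at hL0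
  have hne_top : L ≠ ⊤ := fun h => by
    rw [h] at hLΛ; exact (EReal.coe_lt_top Λ).not_ge hLΛ
  obtain ⟨l, hl⟩ : ∃ l : ℝ, L = (l : EReal) :=
    ⟨L.toReal, (EReal.coe_toReal hne_top hne_bot).symm⟩
  have hl0 : (0:ℝ) ≤ l := by exact_mod_cast hl ▸ hL0
  rw [hl]
  -- reduce to: ∀ ε > 0, minmaxVal D q n ≤ l + ε
  suffices hmain : ∀ ε : ℝ, 0 < ε → minmaxVal D q n ≤ ((l + ε : ℝ) : EReal) by
    by_contra hc
    push_neg at hc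
    obtain ⟨c, hc1, hc2⟩ := EReal.exists_between_coe_real hc
    have hlc : l < c := by exact_mod_cast hc1
    have := hmain (c - l) (by linarith)
    rw [show l + (c - l) = c by ring] at this
    exact hc2.not_ge this
  intro ε hε
  -- choose η > 0 small
  have hcont : ContinuousAt (fun η : ℝ => (1+η)*(l+η)/(1-η*(1+Λ))) 0 := by
    apply ContinuousAt.div
    · fun_prop
    · fun_prop
    · norm_num
  have hf0 : (fun η : ℝ => (1+η)*(l+η)/(1-η*(1+Λ))) 0 = l := by norm_num
  have h1 : ∀ᶠ η in nhdsWithin (0:ℝ) (Set.Ioi 0),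
      (1+η)*(l+η)/(1-η*(1+Λ)) < l + ε := by
    have ht := hcont.tendsto
    rw [show (1 + 0) * (l + 0) / (1 - 0 * (1 + Λ)) = l from by norm_num] at ht
    exact ((ht.mono_left nhdsWithin_le_nhds).eventually_lt_const (by linarith))
  have h2 : ∀ᶠ η in nhdsWithin (0:ℝ) (Set.Ioi 0), η * (1+Λ) < 1 := by
    have ht : Filter.Tendsto (fun η : ℝ => η * (1+Λ)) (nhds 0) (nhds 0) := by
      simpa using ((continuous_mul_right (1+Λ)).tendsto 0)
    exact ((ht.mono_left nhdsWithin_le_nhds).eventually_lt_const one_pos)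
  have h3 : ∀ᶠ η in nhdsWithin (0:ℝ) (Set.Ioi 0), (0:ℝ) < η :=
    eventually_nhdsWithin_of_forall fun x hx => hx
  obtain ⟨η, hfη, hη1, hη0⟩ := (h1.and (h2.and h3)).exists
  -- choose k
  have hfreq : ∃ᶠ k in Filter.atTop,
      minmaxVal (Dk k) (qk k) n < ((l + η : ℝ) : EReal) := by
    apply Filter.frequently_lt_of_liminf_lt (by isBoundedDefault)
    rw [← hLdef, hl]
    exact_mod_cast lt_add_of_pos_right l hη0
  have hδev : ∀ᶠ k in Filter.atTop, δ k < η :=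
    hδlim.eventually_lt_const hη0
  obtain ⟨k, hk1, hk2⟩ := (hfreq.and_eventually hδev).exists
  -- extract the subspace W
  set r : ℝ := min (l + η) Λ with hrdef
  have hrl : r ≤ l + η := min_le_left _ _
  have hrΛ : r ≤ Λ := min_le_right _ _
  have hμr : minmaxVal (Dk k) (qk k) n < ((r : ℝ) : EReal) := by
    rcases min_cases (l + η) Λ with ⟨h, _⟩ | ⟨h, _⟩ <;> rw [hrdef, h]
    · exact hk1
    · exact hμΛ k
  rw [minmaxVal, iInf_lt_iff] at hμr
  obtain ⟨⟨W, hWD, hfin, hrank⟩, hsup⟩ := hμr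
  -- pointwise Rayleigh bound on W
  have hray : ∀ u : Hk k, u ∈ W → u ≠ 0 → qk k u ≤ r * ‖u‖ ^ 2 := by
    intro u hu hu0
    have hlt : ((qk k u / ‖u‖ ^ 2 : ℝ) : EReal) < (r : EReal) := by
      refine lt_of_le_of_lt ?_ hsup
      exact le_iSup (fun x : {x : Hk k // x ∈ W ∧ x ≠ 0} =>
        ((qk k x.1 / ‖x.1‖ ^ 2 : ℝ) : EReal)) ⟨u, hu, hu0⟩
    have hlt' : qk k u / ‖u‖ ^ 2 < r := by exact_mod_cast hlt
    have hn2 : (0:ℝ) < ‖u‖ ^ 2 := pow_pos (norm_pos_iff.mpr hu0) 2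
    calc qk k u = qk k u / ‖u‖ ^ 2 * ‖u‖ ^ 2 := by field_simp
    _ ≤ r * ‖u‖ ^ 2 := by nlinarith
  -- the map φ : W →ₗ H
  haveI := hfin
  set ι : W →ₗ[ℝ] Dk k := Submodule.inclusion hWD with hιdef
  set φ : W →ₗ[ℝ] H := (D.subtype).comp ((J k).comp ι) with hφdef
  have hcoe : ∀ w : W, ((ι w : Dk k) : Hk k) = (w : Hk k) := fun w => rfl
  have hnormι : ∀ w : W, ‖ι w‖ = ‖(w : Hk k)‖ := fun w => rfl
  have hnormφ : ∀ w : W, ‖φ w‖ = ‖J k (ι w)‖ := fun w => rfl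
  have hφeq : ∀ w : W, (φ w : H) = ((J k (ι w) : D) : H) := fun w => rfl
  have hden : (0:ℝ) < 1 - η * (1 + Λ) := by linarith
  -- key per-element estimates
  have hkey : ∀ w : W, w ≠ 0 →
      (1 - η*(1+Λ)) * ‖(w : Hk k)‖ ^ 2 ≤ ‖φ w‖ ^ 2 ∧
      q (φ w) ≤ (1+η) * (l+η) * ‖(w : Hk k)‖ ^ 2 := by
    intro w hw0
    have hw0' : (w : Hk k) ≠ 0 := by simpa using hw0
    have hwn : (0:ℝ) < ‖(w : Hk k)‖ ^ 2 := pow_pos (norm_pos_iff.mpr hw0') 2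
    have hqkw : qk k (w : Hk k) ≤ r * ‖(w : Hk k)‖ ^ 2 := hray _ w.2 hw0'
    have hqkΛ : qk k ((ι w : Dk k) : Hk k) ≤ Λ * ‖ι w‖ ^ 2 := by
      rw [hcoe w, hnormι w]
      nlinarith
    have hqk0 : 0 ≤ qk k (w : Hk k) := hqk k _ (hWD w.2)
    have hi := hiso k (ι w) hqkΛ
    rw [hnormι w, hcoe w, ← hnormφ w] at hi
    have he := henergy k (ι w) hqkΛ
    rw [hcoe w, ← hφeq w] at he
    have habs := abs_le.mp hi
    have hδη : δ k * (‖(w : Hk k)‖ ^ 2 + qk k (w : Hk k)) ≤ η * (1+Λ) * ‖(w : Hk k)‖ ^ 2 := by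
      have h1 : ‖(w : Hk k)‖ ^ 2 + qk k (w : Hk k) ≤ (1+Λ) * ‖(w : Hk k)‖ ^ 2 := by
        nlinarith
      nlinarith [hδ0 k, hk2.le]
    constructor
    · nlinarith [habs.1]
    · have hq1 : q (φ w) ≤ (1 + δ k) * qk k (w : Hk k) := by nlinarith [he]
      have hq2 : (1 + δ k) * qk k (w : Hk k) ≤ (1 + η) * (r * ‖(w : Hk k)‖ ^ 2) := by
        nlinarith [hδ0 k, hk2.le]
      have hq3 : (1 + η) * (r * ‖(w : Hk k)‖ ^ 2) ≤ (1+η) * (l+η) * ‖(w : Hk k)‖ ^ 2 := by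
        nlinarith [mul_nonneg (by linarith : (0:ℝ) ≤ 1 + η) hwn.le, hrl]
      linarith
  -- φ injective
  have hinj : Function.Injective φ := by
    rw [← LinearMap.ker_eq_bot, LinearMap.ker_eq_bot']
    intro w hw
    by_contra hw0
    have := (hkey w hw0).1
    have hw0' : (w : Hk k) ≠ 0 := by simpa using hw0
    have hwn : (0:ℝ) < ‖(w : Hk k)‖ ^ 2 := pow_pos (norm_pos_iff.mpr hw0') 2
    rw [hw] at this
    simp only [norm_zero] at this
    nlinarith
  set W' : Submodule ℝ H := LinearMap.range φ with hW'def
  have hW'D : W' ≤ D := by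
    rintro x ⟨w, rfl⟩
    exact (J k (ι w)).2
  have hW'rank : Module.finrank ℝ W' = n := by
    rw [hW'def, LinearMap.finrank_range_of_inj hinj, hrank]
  -- Rayleigh bound on W'
  set C : ℝ := (1+η)*(l+η)/(1-η*(1+Λ)) with hCdef
  have hmm : minmaxVal D q n ≤ (C : EReal) := by
    apply minmaxVal_le_of_subspace D q n W' hW'D inferInstance hW'rank
    rintro x ⟨w, rfl⟩ hx0
    have hw0 : w ≠ 0 := by rintro rfl; simp at hx0
    obtain ⟨hB, hA⟩ := hkey w hw0
    have hw0' : (w : Hk k) ≠ 0 := by simpa using hw0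
    have hwn : (0:ℝ) < ‖(w : Hk k)‖ ^ 2 := pow_pos (norm_pos_iff.mpr hw0') 2
    have hqx0 : 0 ≤ q (φ w) := hq _ (hW'D ⟨w, rfl⟩)
    have hdiv : q (φ w) / ‖φ w‖ ^ 2 ≤
        ((1+η)*(l+η) * ‖(w : Hk k)‖ ^ 2) / ((1 - η*(1+Λ)) * ‖(w : Hk k)‖ ^ 2) := by
      apply div_le_div₀ (by nlinarith) hA (by nlinarith) hB
    rw [mul_div_mul_right _ _ (ne_of_gt hwn)] at hdiv
    exact hdiv
  refine hmm.trans ?_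
  exact EReal.coe_le_coe_iff.mpr (le_of_lt hfη)
end

section
/- Let (H_k)_{k∈ℕ} be a sequence of real inner product spaces with linear subspaces D_k ⊆ H_k and functions q_k : D_k → ℝ nonnegative on D_k, and let H be a real inner product space with a linear subspace D ⊆ H and a function q : D → ℝ nonnegative on D. Let n ≥ 1 and Λ > 0 be such that μ_n(q) < Λ. Suppose there are real numbers δ_k ≥ 0 with δ_k → 0 and linear maps K_k : D → D_k such that for every k and every u ∈ D with q(u) ≤ Λ‖u‖² one has |‖u‖² − ‖K_k u‖²| ≤ δ_k(‖u‖² + q(u)) and q_k(K_k u) − q(u) ≤ δ_k · q(u). Then limsup_{k→∞} μ_n(q_k) ≤ μ_n(q). -/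
set_option maxHeartbeats 1000000 in
/-- ("extension operators" half of spectral convergence.) If
`μ_n(q) < Λ` and there are linear maps `K_k : D → D_k` that are near isometries with
`H¹`-type error `δ_k → 0` and increase energy by a relative error at most `δ_k`, on
every `u ∈ D` with Rayleigh quotient at most `Λ`, then
`limsup_k μ_n(q_k) ≤ μ_n(q)`. -/
theorem limsup_le_minmax_of_extension
    {H : Type*} [NormedAddCommGroup H] [InnerProductSpace ℝ H]
    (Hk : ℕ → Type*) [∀ k, NormedAddCommGroup (Hk k)] [∀ k, InnerProductSpace ℝ (Hk k)]
    (D : Submodule ℝ H) (Dk : ∀ k, Submodule ℝ (Hk k))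
    (q : H → ℝ) (qk : ∀ k, Hk k → ℝ)
    (hq : ∀ u ∈ D, 0 ≤ q u) (hqk : ∀ k, ∀ u ∈ Dk k, 0 ≤ qk k u)
    (n : ℕ) (hn : 1 ≤ n) (Λ : ℝ) (hΛ : 0 < Λ)
    (hμΛ : minmaxVal D q n < (Λ : EReal))
    (δ : ℕ → ℝ) (hδ0 : ∀ k, 0 ≤ δ k)
    (hδlim : Filter.Tendsto δ Filter.atTop (nhds 0))
    (K : ∀ k, D →ₗ[ℝ] Dk k)
    (hiso : ∀ k, ∀ u : D, q u ≤ Λ * ‖u‖ ^ 2 →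
      |‖u‖ ^ 2 - ‖K k u‖ ^ 2| ≤ δ k * (‖u‖ ^ 2 + q u))
    (henergy : ∀ k, ∀ u : D, q u ≤ Λ * ‖u‖ ^ 2 →
      qk k (K k u) - q u ≤ δ k * q u) :
    Filter.limsup (fun k => minmaxVal (Dk k) (qk k) n) Filter.atTop ≤
      minmaxVal D q n := by
  -- It suffices to show `limsup ≤ c` for every real `c` with `μ_n(q) < c < Λ`.
  have main : ∀ c : ℝ, minmaxVal D q n < (c : EReal) → (c : EReal) < (Λ : EReal) →
      Filter.limsup (fun k => minmaxVal (Dk k) (qk k) n) Filter.atTop ≤ (c : EReal) := by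
    intro c hc hcΛ
    -- pick an intermediate real `c0` with `μ < c0 < c`
    obtain ⟨r, hr1, hr2⟩ := EReal.exists_rat_btwn_of_lt hc
    set c0 : ℝ := (r : ℝ) with hc0def
    have hc0c : c0 < c := EReal.coe_lt_coe_iff.1 hr2
    have hc0Λ : c0 < Λ := lt_trans hc0c (EReal.coe_lt_coe_iff.1 hcΛ)
    -- choose a subspace `W` realizing `μ_n(q) < c0`
    rw [minmaxVal] at hr1
    obtain ⟨⟨W, hWD, hWfd, hWrank⟩, hWsup⟩ := iInf_lt_iff.1 hr1
    -- Rayleigh bound on `W`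
    have hray : ∀ x : H, x ∈ W → x ≠ 0 → q x < c0 * ‖x‖ ^ 2 := by
      intro x hxW hx0
      have hx : ((q x / ‖x‖ ^ 2 : ℝ) : EReal) < (c0 : EReal) :=
        lt_of_le_of_lt (le_iSup (fun y : {x : H // x ∈ W ∧ x ≠ 0} =>
          ((q y.1 / ‖y.1‖ ^ 2 : ℝ) : EReal)) ⟨x, hxW, hx0⟩) hWsup
      have hx' : q x / ‖x‖ ^ 2 < c0 := EReal.coe_lt_coe_iff.1 hx
      have hnorm : (0 : ℝ) < ‖x‖ ^ 2 := pow_pos (norm_pos_iff.mpr hx0) 2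
      calc q x = q x / ‖x‖ ^ 2 * ‖x‖ ^ 2 := by field_simp
        _ < c0 * ‖x‖ ^ 2 := by nlinarith
    -- `c0 > 0` since `W` contains a nonzero vector and `q ≥ 0`
    have hWne : W ≠ ⊥ := by
      intro h
      rw [h] at hWrank
      rw [finrank_bot] at hWrank
      omega
    obtain ⟨x0, hx0W, hx00⟩ := Submodule.exists_mem_ne_zero_of_ne_bot hWne
    have hc0pos : 0 < c0 := by
      have h1 := hray x0 hx0W hx00
      have h2 := hq x0 (hWD hx0W)
      have h3 : (0 : ℝ) < ‖x0‖ ^ 2 := pow_pos (norm_pos_iff.mpr hx00) 2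
      nlinarith
    -- eventual smallness of `δ`
    have hev1 : ∀ᶠ k in Filter.atTop, δ k * (1 + c0) < 1 / 2 := by
      have : Filter.Tendsto (fun k => δ k * (1 + c0)) Filter.atTop (nhds (0 * (1 + c0))) :=
        hδlim.mul_const _
      rw [zero_mul] at this
      exact this.eventually_lt_const (by norm_num)
    have hev2 : ∀ᶠ k in Filter.atTop,
        c0 * (1 + δ k) - c * (1 - δ k * (1 + c0)) < 0 := by
      have : Filter.Tendsto (fun k => c0 * (1 + δ k) - c * (1 - δ k * (1 + c0)))
          Filter.atTop (nhds (c0 * (1 + 0) - c * (1 - 0 * (1 + c0)))) := by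
        apply Filter.Tendsto.sub
        · exact (Filter.Tendsto.add tendsto_const_nhds hδlim).const_mul _
        · exact (Filter.Tendsto.sub tendsto_const_nhds (hδlim.mul_const _)).const_mul _
      simp only [mul_zero, zero_mul, add_zero, sub_zero, mul_one] at this
      exact this.eventually_lt_const (by nlinarith)
    -- the key per-`k` estimate
    have key : ∀ k, δ k * (1 + c0) < 1 / 2 →
        c0 * (1 + δ k) - c * (1 - δ k * (1 + c0)) < 0 →
        minmaxVal (Dk k) (qk k) n ≤ (c : EReal) := by
      intro k hk1 hk2
      -- the subspace `W` pulled back into `D`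
      set W' : Submodule ℝ D := W.comap D.subtype with hW'def
      have e : (W' : Submodule ℝ D) ≃ₗ[ℝ] W := Submodule.comapSubtypeEquivOfLe hWD
      haveI : FiniteDimensional ℝ W' := e.symm.finiteDimensional
      have hW'rank : Module.finrank ℝ W' = n := by rw [e.finrank_eq, hWrank]
      -- the map `ψ : W' → Hk k`
      set ψ : W' →ₗ[ℝ] Hk k := ((Dk k).subtype ∘ₗ K k) ∘ₗ W'.subtype with hψdef
      have hψ : ∀ u : W', ψ u = ((K k u.1 : Dk k) : Hk k) := fun u => rfl
      -- basic estimates for `u ∈ W'`, `u ≠ 0`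
      have hbasic : ∀ u : W', u ≠ 0 →
          0 < ‖(u.1 : H)‖ ^ 2 ∧ q (u.1 : H) < c0 * ‖(u.1 : H)‖ ^ 2 ∧
          (1 - δ k * (1 + c0)) * ‖(u.1 : H)‖ ^ 2 ≤ ‖(K k u.1 : Dk k)‖ ^ 2 := by
        intro u hu0
        have hu1 : (u.1 : H) ≠ 0 := by
          intro h
          apply hu0
          ext
          exact h
        have huW : (u.1 : H) ∈ W := u.2
        have hpos : (0 : ℝ) < ‖(u.1 : H)‖ ^ 2 := pow_pos (norm_pos_iff.mpr hu1) 2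
        have hqu : q (u.1 : H) < c0 * ‖(u.1 : H)‖ ^ 2 := hray _ huW hu1
        have hqΛ : q (u.1 : H) ≤ Λ * ‖(u.1 : H)‖ ^ 2 := by nlinarith
        have hiso' := hiso k u.1 (by rwa [Submodule.coe_norm])
        rw [Submodule.coe_norm] at hiso'
        have habs := abs_le.1 hiso'
        have hq0 := hq (u.1 : H) u.1.2
        refine ⟨hpos, hqu, ?_⟩
        nlinarith [habs.1, habs.2]
      -- `ψ` is injective
      have hinj : Function.Injective ψ := by
        rw [← LinearMap.ker_eq_bot, LinearMap.ker_eq_bot']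
        intro u hu
        by_contra hu0
        obtain ⟨hpos, hqu, hK⟩ := hbasic u hu0
        have : ‖(K k u.1 : Dk k)‖ ^ 2 = 0 := by
          rw [hψ] at hu
          rw [Submodule.coe_norm, hu]
          simp
        nlinarith
      -- the image subspace
      set Wk : Submodule ℝ (Hk k) := LinearMap.range ψ with hWkdef
      haveI : FiniteDimensional ℝ Wk := inferInstance
      have hWkrank : Module.finrank ℝ Wk = n := by
        rw [LinearMap.finrank_range_of_inj hinj, hW'rank]
      have hWkD : Wk ≤ Dk k := by
        rintro x ⟨u, rfl⟩
        exact (K k u.1).2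
      -- estimate the Rayleigh quotient on `Wk`
      rw [minmaxVal]
      refine le_trans (iInf_le _ ⟨Wk, hWkD, inferInstance, hWkrank⟩) (iSup_le ?_)
      rintro ⟨v, hvW, hv0⟩
      obtain ⟨u, rfl⟩ := hvW
      have hu0 : u ≠ 0 := by
        intro h
        apply hv0
        rw [h, map_zero]
      obtain ⟨hpos, hqu, hK⟩ := hbasic u hu0
      have hδk := hδ0 k
      have hqΛ : q (u.1 : H) ≤ Λ * ‖(u.1 : H)‖ ^ 2 := by nlinarith
      have hen := henergy k u.1 (by rwa [Submodule.coe_norm])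
      have hq0 := hq (u.1 : H) u.1.2
      have hvnorm : ‖ψ u‖ ^ 2 = ‖(K k u.1 : Dk k)‖ ^ 2 := by
        rw [hψ, Submodule.coe_norm]
      have hvpos : (0 : ℝ) < ‖ψ u‖ ^ 2 := by
        rw [hvnorm]
        nlinarith
      have hqkv : qk k (ψ u) ≤ c0 * (1 + δ k) * ‖(u.1 : H)‖ ^ 2 := by
        have : qk k (ψ u) = qk k ((K k u.1 : Dk k) : Hk k) := by rw [hψ]
        rw [this]
        nlinarith
      have hfinal : qk k (ψ u) / ‖ψ u‖ ^ 2 ≤ c := by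
        rw [div_le_iff₀ hvpos]
        have h1 : c0 * (1 + δ k) * ‖(u.1 : H)‖ ^ 2 ≤
            c * (1 - δ k * (1 + c0)) * ‖(u.1 : H)‖ ^ 2 := by nlinarith
        have h2 : c * (1 - δ k * (1 + c0)) * ‖(u.1 : H)‖ ^ 2 ≤ c * ‖ψ u‖ ^ 2 := by
          rw [hvnorm]
          have hc0c' : 0 < c := lt_trans hc0pos hc0c
          nlinarith
        linarith
      exact_mod_cast EReal.coe_le_coe_iff.2 hfinal
    -- conclude via the eventual bound
    refine Filter.limsup_le_of_le (by isBoundedDefault) ?_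
    filter_upwards [hev1, hev2] with k h1 h2
    exact key k h1 h2
  -- finish: `limsup ≤ μ` by density
  refine le_of_forall_gt_imp_ge_of_dense ?_
  intro a ha
  have hmin : minmaxVal D q n < min a (Λ : EReal) := lt_min ha hμΛ
  obtain ⟨r, hr1, hr2⟩ := EReal.exists_rat_btwn_of_lt hmin
  have hrΛ : ((r : ℝ) : EReal) < (Λ : EReal) := lt_of_lt_of_le hr2 (min_le_right _ _)
  have hra : ((r : ℝ) : EReal) ≤ a := le_of_lt (lt_of_lt_of_le hr2 (min_le_left _ _))
  exact le_trans (main (r : ℝ) hr1 hrΛ) hra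
end
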